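/- With notation as above, a point [z] ∈ Per is fixed by the involution σ([z]) = [c(z̄)] if and only if z can be written (up to complex scalar) as ω₊ + i ω₋ with ω₊ ∈ L₊, ω₋ ∈ L₋ real vectors satisfying q(ω₊) = q(ω₋) > 0 and ⟨ω₊, ω₋⟩ = 0. -/
import Mathlib


open Module

def conjPair {L : Type*} [AddCommGroup L] [Module ℝ L] (z : L × L) : L × L :=
  (z.1, -z.2)

noncomputable def qC {L : Type*} [AddCommGroup L] [Module ℝ L]
    (B : L →ₗ[ℝ] L →ₗ[ℝ] ℝ) (z : L × L) : ℂ :=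
  ((B z.1 z.1 - B z.2 z.2 : ℝ) : ℂ) + ((2 * B z.1 z.2 : ℝ) : ℂ) * Complex.I

def InPer {L : Type*} [AddCommGroup L] [Module ℝ L]
    (B : L →ₗ[ℝ] L →ₗ[ℝ] ℝ) (z : L × L) : Prop :=
  qC B z = 0 ∧ 0 < (qC B (z + conjPair z)).re ∧ (qC B (z + conjPair z)).im = 0

def sigmaMap {L : Type*} [AddCommGroup L] [Module ℝ L]
    (c : L →ₗ[ℝ] L) (z : L × L) : L × L :=
  (c z.1, -(c z.2))

/-- Multiplication by the complex scalar `lam` on `L ⊗ ℂ` (pairs `(x, y) = x + i y`). -/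
def cmul {L : Type*} [AddCommGroup L] [Module ℝ L] (lam : ℂ) (z : L × L) : L × L :=
  (lam.re • z.1 - lam.im • z.2, lam.im • z.1 + lam.re • z.2)

lemma cmul_cmul' {L : Type*} [AddCommGroup L] [Module ℝ L] (a b : ℂ) (z : L × L) :
    cmul a (cmul b z) = cmul (a * b) z := by
  simp only [cmul, Complex.mul_re, Complex.mul_im, Prod.mk.injEq]
  constructor <;> module

lemma cmul_one' {L : Type*} [AddCommGroup L] [Module ℝ L] (z : L × L) :
    cmul 1 z = z := by
  simp [cmul]

lemma sigma_cmul' {L : Type*} [AddCommGroup L] [Module ℝ L] (c : L →ₗ[ℝ] L)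
    (lam : ℂ) (z : L × L) :
    sigmaMap c (cmul lam z) = cmul (starRingEnd ℂ lam) (sigmaMap c z) := by
  simp only [sigmaMap, cmul, map_sub, map_add, map_smul, Complex.conj_re,
    Complex.conj_im, Prod.mk.injEq]
  constructor <;> module
theorem stmt5 (L : Type*) [AddCommGroup L] [Module ℝ L] [FiniteDimensional ℝ L]
    (B : L →ₗ[ℝ] L →ₗ[ℝ] ℝ)
    (hsymm : ∀ x y, B x y = B y x)
    (hnd : ∀ x, (∀ y, B x y = 0) → x = 0)
    (c : L →ₗ[ℝ] L) (hc : c ∘ₗ c = LinearMap.id)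
    (hiso : ∀ x y, B (c x) (c y) = B x y)
    (z : L × L) (hz : InPer B z) :
    (∃ lam : ℂ, lam ≠ 0 ∧ sigmaMap c z = cmul lam z) ↔
    (∃ (mu : ℂ) (wp wm : L), mu ≠ 0 ∧
      wp ∈ LinearMap.ker (c - LinearMap.id) ∧
      wm ∈ LinearMap.ker (c + LinearMap.id) ∧
      B wp wp = B wm wm ∧ 0 < B wp wp ∧ B wp wm = 0 ∧
      z = cmul mu (wp, wm)) := by
  obtain ⟨hq0, hqpos, -⟩ := hz
  -- extract real conditions from qC z = 0
  have hq0' := Complex.ext_iff.mp hq0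
  simp only [qC, Complex.add_re, Complex.ofReal_re, Complex.mul_re, Complex.I_re,
    Complex.I_im, Complex.ofReal_im, Complex.add_im, Complex.mul_im, Complex.zero_re,
    Complex.zero_im, mul_zero, mul_one, zero_mul, sub_zero, zero_add, add_zero,
    zero_sub, neg_zero] at hq0'
  obtain ⟨h1, h2⟩ := hq0'
  have hb1 : B z.1 z.1 = B z.2 z.2 := by linarith
  have hb2 : B z.1 z.2 = 0 := by linarith
  have hs : B z.2 z.1 = 0 := by rw [hsymm]; exact hb2
  -- positivity
  have hpos : 0 < B z.1 z.1 := by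
    simp only [qC, conjPair, Prod.fst_add, Prod.snd_add, add_neg_cancel, map_add,
      map_zero, LinearMap.add_apply, LinearMap.zero_apply, Complex.add_re,
      Complex.ofReal_re, Complex.mul_re, Complex.I_re, Complex.I_im,
      Complex.ofReal_im, mul_zero, mul_one, zero_mul, sub_zero, add_zero,
      zero_add] at hqpos
    linarith
  have hz1 : z.1 ≠ 0 := by
    intro h
    rw [h] at hpos
    simp at hpos
  have hcc : ∀ x, c (c x) = x := fun x => by
    simpa using LinearMap.congr_fun hc x
  constructor
  · rintro ⟨lam, hlam, h⟩
    -- apply sigma twice: |lam|^2 = 1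
    have hss : sigmaMap c (sigmaMap c z) = z := by
      simp [sigmaMap, hcc]
    have h2' : z = cmul ((Complex.normSq lam : ℝ) : ℂ) z := by
      have := congrArg (sigmaMap c) h
      rw [hss, sigma_cmul' c lam z, h, cmul_cmul'] at this
      rw [this]
      congr 1
      rw [mul_comm, Complex.mul_conj]
    have hn1 : Complex.normSq lam = 1 := by
      have h3 : z.1 = (Complex.normSq lam : ℝ) • z.1 := by
        have := congrArg Prod.fst h2'
        simpa [cmul] using this
      by_contra hne
      have h4 : ((Complex.normSq lam : ℝ) - 1) • z.1 = 0 := by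
        rw [sub_smul, one_smul, ← h3, sub_self]
      rcases smul_eq_zero.mp h4 with h5 | h5
      · exact hne (by linarith [sub_eq_zero.mp h5])
      · exact hz1 h5
    -- square root
    obtain ⟨nu, hnu⟩ : ∃ nu : ℂ, nu ^ 2 = lam :=
      IsAlgClosed.exists_pow_nat_eq lam (n := 2) (by norm_num)
    have hnun : Complex.normSq nu = 1 := by
      have : Complex.normSq nu ^ 2 = 1 := by
        rw [← map_pow, hnu, hn1]
      nlinarith [Complex.normSq_nonneg nu]
    have hns : nu.re * nu.re + nu.im * nu.im = 1 := by
      have := Complex.normSq_apply nu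
      rw [this] at hnun
      linarith
    have hnu0 : nu ≠ 0 := by
      intro h'
      rw [h'] at hnun
      simp at hnun
    have hconj : starRingEnd ℂ nu * nu = 1 := by
      rw [mul_comm, Complex.mul_conj, hnun, Complex.ofReal_one]
    set w : L × L := cmul nu z with hw
    -- sigma w = w
    have hsw : sigmaMap c w = w := by
      rw [hw, sigma_cmul' c nu z, h, cmul_cmul']
      have hcl : starRingEnd ℂ nu * lam = nu := by
        calc starRingEnd ℂ nu * lam = starRingEnd ℂ nu * nu * nu := by rw [← hnu]; ring
          _ = nu := by rw [hconj, one_mul]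
      rw [hcl]
    have hsw1 : c w.1 = w.1 := congrArg Prod.fst hsw
    have hsw2 : c w.2 = -w.2 := by
      have h6 : -(c w.2) = w.2 := congrArg Prod.snd hsw
      exact neg_eq_iff_eq_neg.mp h6
    have e1 : w.1 = nu.re • z.1 - nu.im • z.2 := rfl
    have e2 : w.2 = nu.im • z.1 + nu.re • z.2 := rfl
    have key1 : B w.1 w.1 = B z.1 z.1 := by
      rw [e1]
      simp only [map_sub, map_smul, LinearMap.sub_apply, LinearMap.smul_apply,
        smul_eq_mul]
      linear_combination (B z.1 z.1) * hns - nu.im * nu.im * hb1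
        - nu.re * nu.im * hs - nu.re * nu.im * hb2
    have key2 : B w.2 w.2 = B z.1 z.1 := by
      rw [e2]
      simp only [map_add, map_smul, LinearMap.add_apply, LinearMap.smul_apply,
        smul_eq_mul]
      linear_combination (B z.1 z.1) * hns - nu.re * nu.re * hb1
        + nu.re * nu.im * hs + nu.re * nu.im * hb2
    have key3 : B w.1 w.2 = 0 := by
      rw [e1, e2]
      simp only [map_sub, map_add, map_smul, LinearMap.sub_apply, LinearMap.add_apply,
        LinearMap.smul_apply, smul_eq_mul]
      linear_combination nu.re * nu.im * hb1 + nu.re * nu.re * hb2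
        - nu.im * nu.im * hs
    refine ⟨starRingEnd ℂ nu, w.1, w.2, ?_, ?_, ?_, ?_, ?_, key3, ?_⟩
    · simpa using hnu0
    · simp [LinearMap.mem_ker, LinearMap.sub_apply, hsw1]
    · simp [LinearMap.mem_ker, LinearMap.add_apply, hsw2]
    · rw [key1, key2]
    · rw [key1]; exact hpos
    · have hfin : cmul (starRingEnd ℂ nu) w = z := by
        rw [hw, cmul_cmul', hconj, cmul_one']
      rw [← hfin]
  · rintro ⟨mu, wp, wm, hmu, hwp, hwm, -, -, -, hzeq⟩
    have hcwp : c wp = wp := by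
      have h7 := LinearMap.mem_ker.mp hwp
      simpa [LinearMap.sub_apply, sub_eq_zero] using h7
    have hcwm : c wm = -wm := by
      have h8 := LinearMap.mem_ker.mp hwm
      simp only [LinearMap.add_apply, LinearMap.id_apply] at h8
      exact eq_neg_of_add_eq_zero_left h8
    refine ⟨starRingEnd ℂ mu * mu⁻¹, ?_, ?_⟩
    · exact mul_ne_zero (by simpa using hmu) (inv_ne_zero hmu)
    · have hfix : sigmaMap c ((wp, wm) : L × L) = (wp, wm) := by
        simp [sigmaMap, hcwp, hcwm]
      have hmul : starRingEnd ℂ mu * mu⁻¹ * mu = starRingEnd ℂ mu := by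
        field_simp
      rw [hzeq, sigma_cmul', hfix, cmul_cmul', hmul]
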